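/- Let C ⊆ F_p^n be a code and define f : F_p^n → ℂ by f(y) = Σ_{c ∈ C} ω^{c·y}, where ω = exp(2πi/p). If f vanishes on the complement of a proper linear subspace V_0 < F_p^n, then there exists a nonzero vector s ∈ F_p^n with C + s = C. -/

import Mathlib

/-! Pick `s ≠ 0` orthogonal to `V₀`. Translating `C` by `s` multiplies `f(y)` by `ω^{s·y}`, which is
`1` on `V₀`, while `f` vanishes off `V₀`; so `C` and `C + s` have the same character sum. Distinct
characters `y ↦ ω^{c·y}` are linearly independent, so the character sum determines the code, and
`C + s = C`. -/

open Finset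

noncomputable def omegaP (p : ℕ) : ℂ := Complex.exp (2 * Real.pi * Complex.I / p)

def dotp {p n : ℕ} (x y : Fin n → ZMod p) : ZMod p := ∑ i, x i * y i

noncomputable def fsum {p n : ℕ} (C : Finset (Fin n → ZMod p)) (y : Fin n → ZMod p) : ℂ :=
  ∑ c ∈ C, omegaP p ^ (dotp c y).val

theorem LinearIndependent.eq_of_sum_eq_sum {ι R M : Type*} [Ring R] [Nontrivial R]
    [AddCommGroup M] [Module R M] {v : ι → M} (hv : LinearIndependent R v)
    {s t : Finset ι} (h : ∑ i ∈ s, v i = ∑ i ∈ t, v i) : s = t := by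
  classical
  set g : ι → R := fun i => (if i ∈ s then 1 else 0) - (if i ∈ t then 1 else 0)
  have hg : ∑ i ∈ s ∪ t, g i • v i = 0 := by
    simp only [g, sub_smul, ite_smul, one_smul, zero_smul, sum_sub_distrib, sum_ite_mem,
      union_inter_cancel_left, union_inter_cancel_right, h, sub_self]
  ext i
  by_cases hi : i ∈ s ∪ t
  · have := linearIndependent_iff'.mp hv _ _ hg i hi
    by_cases his : i ∈ s <;> by_cases hit : i ∈ t <;> simp_all [g]
  · simp_all

namespace AddChar

variable {ι R M : Type*} [Fintype ι] [CommRing R] [CommMonoid M]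

noncomputable def dotProductChar (ψ : AddChar R M) (c : ι → R) : AddChar (ι → R) M :=
  ψ.compAddMonoidHom (AddMonoidHom.mk' (dotProduct c) (dotProduct_add c))

@[simp]
lemma dotProductChar_apply (ψ : AddChar R M) (c y : ι → R) :
    ψ.dotProductChar c y = ψ (c ⬝ᵥ y) := rfl

lemma dotProductChar_injective {ψ : AddChar R M} (hψ : ψ.IsPrimitive) :
    Function.Injective (ψ.dotProductChar : (ι → R) → AddChar (ι → R) M) := by
  classical
  intro c c' h
  ext i
  refine to_mulShift_inj_of_isPrimitive hψ (AddChar.ext _ _ fun t => ?_)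
  simpa [dotProduct_single] using DFunLike.congr_fun h (Pi.single i t)

end AddChar

theorem image_add_eq_of_sum_addChar_dotProduct_eq_zero {ι R : Type*} [Fintype ι] [CommRing R]
    [Finite R] [DecidableEq (ι → R)] {ψ : AddChar R ℂ} (hψ : ψ.IsPrimitive)
    {C : Finset (ι → R)} {s : ι → R} (h : ∀ y, s ⬝ᵥ y ≠ 0 → ∑ c ∈ C, ψ (c ⬝ᵥ y) = 0) :
    C.image (· + s) = C := by
  have hsum : ∀ y, ∑ c ∈ C.image (· + s), ψ (c ⬝ᵥ y) = ∑ c ∈ C, ψ (c ⬝ᵥ y) := by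
    intro y
    simp only [sum_image (add_left_injective s).injOn, add_dotProduct, AddChar.map_add_eq_mul, ← sum_mul]
    by_cases hy : s ⬝ᵥ y = 0
    · rw [hy, AddChar.map_zero_eq_one, mul_one]
    · rw [h y hy, zero_mul]
  refine ((AddChar.linearIndependent (ι → R) ℂ).comp _
    (AddChar.dotProductChar_injective hψ)).eq_of_sum_eq_sum ?_
  funext y
  simpa using hsum y

theorem Submodule.exists_ne_zero_dotProduct_eq_zero {K ι : Type*} [Field K] [Fintype ι]
    [DecidableEq ι] {V : Submodule K (ι → K)} (hV : V ≠ ⊤) :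
    ∃ s ≠ 0, ∀ y ∈ V, s ⬝ᵥ y = 0 := by
  obtain ⟨φ, hφ, hφV⟩ := V.exists_dual_map_eq_bot_of_lt_top hV.lt_top inferInstance
  refine ⟨(dotProductEquiv K ι).symm φ, by simpa using hφ, fun y hy => ?_⟩
  rw [← dotProductEquiv_apply_apply, LinearEquiv.apply_symm_apply, ← Submodule.mem_bot K, ← hφV]
  exact Submodule.mem_map_of_mem hy

lemma omegaP_pow_val {p : ℕ} [NeZero p] (t : ZMod p) : omegaP p ^ t.val = ZMod.stdAddChar t := by
  rw [ZMod.stdAddChar_apply, ZMod.toCircle_apply, omegaP, ← Complex.exp_nat_mul]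
  ring_nf

lemma fsum_eq_sum_stdAddChar {p n : ℕ} [NeZero p] (C : Finset (Fin n → ZMod p))
    (y : Fin n → ZMod p) : fsum C y = ∑ c ∈ C, ZMod.stdAddChar (c ⬝ᵥ y) := by
  simp only [fsum, omegaP_pow_val]
  rfl

/-- Lemma (vanishing character sum), first part: if `f` vanishes outside a proper subspace
`V₀ < F_p^n`, then `C` is invariant under translation by some nonzero vector `s`. -/
theorem stmt1 (p n : ℕ) [Fact p.Prime] (C : Finset (Fin n → ZMod p))
    (V0 : Submodule (ZMod p) (Fin n → ZMod p)) (hV0 : V0 ≠ ⊤)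
    (hf : ∀ y ∉ V0, fsum C y = 0) :
    ∃ s : Fin n → ZMod p, s ≠ 0 ∧ C.image (fun c => c + s) = C := by
  obtain ⟨s, hs, hsV⟩ := V0.exists_ne_zero_dotProduct_eq_zero hV0
  refine ⟨s, hs, image_add_eq_of_sum_addChar_dotProduct_eq_zero (ZMod.isPrimitive_stdAddChar p)
    fun y hy => ?_⟩
  rw [← fsum_eq_sum_stdAddChar]
  exact hf y fun hyV => hy (hsV y hyV)
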